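/- arXiv:0907.0939 — 8 statements merged into one kernel-verified Lean document; each statement's English description precedes it below -/
import Mathlib

section
/- The cumulated profile is a lower bound on the actual resource usage: for any assignment of start times s(a) ∈ D(start[a]) for all activities a, and any time point t, the sum over activities a whose compulsory part contains t of min(D(res[a])) is at most the sum over activities a with s(a) ≤ t < s(a) + dur(a) of r(a), where r(a) ∈ D(res[a]). -/
/-- The cumulated profile is a lower bound on the actual resource usage: for any
instantiation `s a ∈ D(start a)`, `r a ∈ D(res a)`, and any time `t`, the sum of
minimal resources of activities whose compulsory part `[smax a, smin a + dur a)`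
contains `t` is at most the height `h_t` of the instantiation at `t`.
Here `smin a`/`smax a` are the min/max of `D(start a)` and `rmin a` the min of `D(res a)`. -/
theorem cumulated_profile_le_height {α : Type*} [DecidableEq α]
    (A : Finset α) (sdom rdom : α → Finset ℤ)
    (smin smax rmin : α → ℤ)
    (hsmin : ∀ a ∈ A, smin a ∈ sdom a ∧ ∀ v ∈ sdom a, smin a ≤ v)
    (hsmax : ∀ a ∈ A, smax a ∈ sdom a ∧ ∀ v ∈ sdom a, v ≤ smax a)
    (hrmin : ∀ a ∈ A, rmin a ∈ rdom a ∧ ∀ v ∈ rdom a, rmin a ≤ v)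
    (dur : α → ℤ) (hdur : ∀ a ∈ A, 1 ≤ dur a)
    (hpos : ∀ a ∈ A, ∀ v ∈ rdom a, 0 < v)
    (s r : α → ℤ) (hsmem : ∀ a ∈ A, s a ∈ sdom a) (hrmem : ∀ a ∈ A, r a ∈ rdom a)
    (t : ℤ) :
    ∑ a ∈ A.filter (fun a => smax a ≤ t ∧ t < smin a + dur a), rmin a
      ≤ ∑ a ∈ A.filter (fun a => s a ≤ t ∧ t < s a + dur a), r a := by
  have hsub : A.filter (fun a => smax a ≤ t ∧ t < smin a + dur a) ⊆
      A.filter (fun a => s a ≤ t ∧ t < s a + dur a) := by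
    intro a ha
    simp only [Finset.mem_filter] at ha ⊢
    obtain ⟨haA, h1, h2⟩ := ha
    refine ⟨haA, ?_, ?_⟩
    · exact le_trans ((hsmax a haA).2 _ (hsmem a haA)) h1
    · exact lt_of_lt_of_le h2 (by linarith [(hsmin a haA).2 _ (hsmem a haA)])
  calc ∑ a ∈ A.filter (fun a => smax a ≤ t ∧ t < smin a + dur a), rmin a
      ≤ ∑ a ∈ A.filter (fun a => smax a ≤ t ∧ t < smin a + dur a), r a := by
        refine Finset.sum_le_sum fun a ha => ?_
        have haA := (Finset.mem_filter.mp ha).1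
        exact (hrmin a haA).2 _ (hrmem a haA)
    _ ≤ ∑ a ∈ A.filter (fun a => s a ≤ t ∧ t < s a + dur a), r a := by
        refine Finset.sum_le_sum_of_subset_of_nonneg hsub fun a ha _ => ?_
        have haA := (Finset.mem_filter.mp ha).1
        exact le_of_lt (hpos a haA _ (hrmem a haA))
end

section
/- Soundness of the sweep pruning rule: suppose on the interval [δ, δ'), the profile (excluding activity a) has height sum_h at every point, and sum_h + min(D(res[a])) > max_capa. Then in any feasible solution (where at every time t the total height is at most max_capa), the start of a cannot lie in (δ − dur(a), δ'), i.e., any value in that range can be removed from D(start[a]). -/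
/-- Soundness of the sweep pruning rule: if on every time point of `[δ, δ')` the
activities other than `a` contribute height at least `sum_h`, and
`sum_h + min(D(res a)) > max_capa`, then any instantiation in which
`δ - dur a < s a < δ'` (i.e. `a` overlaps a point of `[δ, δ')`) violates the
capacity `max_capa` at some time point, hence `(δ - dur a, δ')` can be removed
from `D(start a)`. -/
theorem sweep_pruning_sound {α : Type*} [DecidableEq α]
    (A : Finset α) (a : α) (ha : a ∈ A)
    (dur : α → ℤ) (hdur : ∀ b ∈ A, 1 ≤ dur b)
    (s r : α → ℤ) (rmin_a : ℤ) (hr : rmin_a ≤ r a)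
    (δ δ' sum_h max_capa : ℤ) (hδ : δ < δ')
    (hprofile : ∀ t, δ ≤ t → t < δ' →
      sum_h ≤ ∑ b ∈ (A.erase a).filter (fun b => s b ≤ t ∧ t < s b + dur b), r b)
    (hover : max_capa < sum_h + rmin_a)
    (hstart : δ - dur a < s a ∧ s a < δ') :
    ¬ (∀ t, ∑ b ∈ A.filter (fun b => s b ≤ t ∧ t < s b + dur b), r b ≤ max_capa) := by
  intro hfeas
  obtain ⟨h1, h2⟩ := hstart
  set t := max δ (s a) with ht
  have hda : 1 ≤ dur a := hdur a ha
  have hδt : δ ≤ t := le_max_left _ _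
  have hst : s a ≤ t := le_max_right _ _
  have htδ' : t < δ' := max_lt hδ h2
  have hta : t < s a + dur a := by
    rw [ht]; rcases max_cases δ (s a) with ⟨h, _⟩ | ⟨h, _⟩ <;> rw [h] <;> omega
  have hmem : a ∈ A.filter (fun b => s b ≤ t ∧ t < s b + dur b) :=
    Finset.mem_filter.2 ⟨ha, hst, hta⟩
  have hsplit : ∑ b ∈ A.filter (fun b => s b ≤ t ∧ t < s b + dur b), r b
      = r a + ∑ b ∈ (A.erase a).filter (fun b => s b ≤ t ∧ t < s b + dur b), r b := by
    rw [Finset.filter_erase, Finset.add_sum_erase _ _ hmem]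
  have := hprofile t hδt htδ'
  have := hfeas t
  omega
end

section
/- Validity of the energy lower bound W: for any activity a ∈ S_{(ai,aj)} and any feasible instantiation, the number of resource units consumed by a within the interval I = [min(D(start[ai])), max(D(end[aj]))) is at least min(D(res[a])) · min(dur(a), max(0, max(D(end[aj])) − max(D(start[a])))). -/
/-- Validity of the energy lower bound `W`: if `a ∈ S_{(ai,aj)}` (i.e.
`lo ≤ min(D(start a))`), then for any instantiation the consumption of `a`
inside `I = [lo, hi)`, namely `r a` times the number of covered time points,
is at least `min(D(res a)) * min (dur a) (max 0 (hi - max(D(start a))))`. -/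
theorem energy_lower_bound_valid
    (S : Finset ℤ) (hS : S.Nonempty) (s : ℤ) (hs : s ∈ S)
    (d : ℤ) (hd : 1 ≤ d) (r rmin : ℤ) (hrmin : 0 < rmin) (hr : rmin ≤ r)
    (lo hi : ℤ) (hlo : lo ≤ S.min' hS) :
    rmin * min d (max 0 (hi - S.max' hS)) ≤
      r * ((Finset.Ico lo hi ∩ Finset.Ico s (s + d)).card : ℤ) := by
  have hls : lo ≤ s := hlo.trans (S.min'_le s hs)
  have hsm : s ≤ S.max' hS := S.le_max' s hs
  rw [Finset.Ico_inter_Ico, max_eq_right hls, Int.card_Ico]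
  set M := S.max' hS
  have hcard : (0 : ℤ) ≤ ((min hi (s + d) - s).toNat : ℤ) := Int.ofNat_nonneg _
  have hrpos : (0 : ℤ) ≤ r := hrmin.le.trans hr
  rcases le_or_gt (hi - M) 0 with h | h
  · have : min d (max 0 (hi - M)) ≤ 0 := le_trans (min_le_right _ _) (by simp [h])
    calc rmin * min d (max 0 (hi - M)) ≤ rmin * 0 :=
          mul_le_mul_of_nonneg_left this hrmin.le
      _ = 0 := by ring
      _ ≤ _ := mul_nonneg hrpos hcard
  · have hmax : max 0 (hi - M) = hi - M := max_eq_right h.le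
    rw [hmax]
    have hc0 : 0 ≤ min d (hi - M) := le_min (by linarith) h.le
    have hle : min d (hi - M) ≤ min hi (s + d) - s := by
      rw [show min hi (s + d) - s = min (hi - s) d by rw [← min_sub_sub_right]; ring_nf]
      exact le_min (by have := min_le_right d (hi - M); linarith) (min_le_left _ _)
    have hle' : min d (hi - M) ≤ ((min hi (s + d) - s).toNat : ℤ) :=
      hle.trans (Int.self_le_toNat _)
    exact mul_le_mul hr hle' hc0 hrpos
end

section
/- Task-interval feasibility rule: if the sum over all activities a in S_{(ai,aj)} of the energy lower bounds W_{(ai,aj)}(a) strictly exceeds Area_{(ai,aj)} = (max(D(end[aj])) − min(D(start[ai]))) · max_capa, then the Cumulative constraint has no solution. -/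
/-- Task-interval feasibility rule: with `S = {a ∈ A : lo ≤ smin a < hi}` and
`W a = rmin a * min (dur a) (max 0 (hi - smax a))`, if `∑_{a ∈ S} W a` strictly
exceeds `(hi - lo) * max_capa` then the Cumulative constraint has no solution:
every instantiation `s, r` with `smin a ≤ s a ≤ smax a` and `0 < rmin a ≤ r a`
violates the capacity at some time point. -/
theorem task_interval_infeasible {α : Type*} [DecidableEq α]
    (A : Finset α) (dur smin smax rmin : α → ℤ)
    (hdur : ∀ a ∈ A, 1 ≤ dur a) (hrmin : ∀ a ∈ A, 0 < rmin a)
    (lo hi max_capa : ℤ) (hlohi : lo < hi)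
    (s r : α → ℤ)
    (hsmin : ∀ a ∈ A, smin a ≤ s a) (hsmax : ∀ a ∈ A, s a ≤ smax a)
    (hr : ∀ a ∈ A, rmin a ≤ r a)
    (hW : (hi - lo) * max_capa <
      ∑ a ∈ A.filter (fun a => lo ≤ smin a ∧ smin a < hi),
        rmin a * min (dur a) (max 0 (hi - smax a))) :
    ¬ (∀ t, ∑ a ∈ A.filter (fun a => s a ≤ t ∧ t < s a + dur a), r a ≤ max_capa) := by
  intro hcap
  set T : Finset ℤ := Finset.Ico lo hi with hT
  -- total load over the window is bounded by the area
  have hload : ∑ t ∈ T, ∑ a ∈ A.filter (fun a => s a ≤ t ∧ t < s a + dur a), r a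
      ≤ (hi - lo) * max_capa := by
    calc ∑ t ∈ T, ∑ a ∈ A.filter (fun a => s a ≤ t ∧ t < s a + dur a), r a
        ≤ ∑ _t ∈ T, max_capa := Finset.sum_le_sum (fun t _ => hcap t)
      _ = (T.card : ℤ) * max_capa := by rw [Finset.sum_const, nsmul_eq_mul]
      _ = (hi - lo) * max_capa := by
          rw [hT, Int.card_Ico]
          congr 1
          exact Int.toNat_of_nonneg (by omega)
  -- swap the order of summation
  have hswap : ∑ t ∈ T, ∑ a ∈ A.filter (fun a => s a ≤ t ∧ t < s a + dur a), r a
      = ∑ a ∈ A, r a * ((T.filter (fun t => s a ≤ t ∧ t < s a + dur a)).card : ℤ) := by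
    simp_rw [Finset.sum_filter]
    rw [Finset.sum_comm]
    refine Finset.sum_congr rfl (fun a _ => ?_)
    rw [← Finset.sum_filter, Finset.sum_const, nsmul_eq_mul, mul_comm]
  -- each activity in S contributes at least its energy lower bound
  have hterm : ∀ a ∈ A.filter (fun a => lo ≤ smin a ∧ smin a < hi),
      rmin a * min (dur a) (max 0 (hi - smax a))
        ≤ r a * ((T.filter (fun t => s a ≤ t ∧ t < s a + dur a)).card : ℤ) := by
    intro a ha
    rw [Finset.mem_filter] at ha
    obtain ⟨haA, hlos, _⟩ := ha
    have hcardeq : T.filter (fun t => s a ≤ t ∧ t < s a + dur a)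
        = Finset.Ico (max lo (s a)) (min hi (s a + dur a)) := by
      ext t
      simp only [hT, Finset.mem_filter, Finset.mem_Ico, le_max_iff, max_le_iff,
        lt_min_iff, min_lt_iff]
      omega
    have hcard : ((T.filter (fun t => s a ≤ t ∧ t < s a + dur a)).card : ℤ)
        = (min hi (s a + dur a) - max lo (s a)).toNat := by
      rw [hcardeq, Int.card_Ico]
    have hmn : min (dur a) (max 0 (hi - smax a))
        ≤ ((T.filter (fun t => s a ≤ t ∧ t < s a + dur a)).card : ℤ) := by
      rw [hcard]
      have h1 := Int.self_le_toNat (min hi (s a + dur a) - max lo (s a))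
      have h2 := hsmin a haA
      have h3 := hsmax a haA
      have h4 : (0:ℤ) ≤ ((min hi (s a + dur a) - max lo (s a)).toNat : ℤ) :=
        Int.natCast_nonneg _
      omega
    have h0 : 0 ≤ min (dur a) (max 0 (hi - smax a)) := by
      have := hdur a haA; omega
    have hra : 0 ≤ r a := le_of_lt (lt_of_lt_of_le (hrmin a haA) (hr a haA))
    exact mul_le_mul (hr a haA) hmn h0 hra
  have hS : ∑ a ∈ A.filter (fun a => lo ≤ smin a ∧ smin a < hi),
        rmin a * min (dur a) (max 0 (hi - smax a))
      ≤ ∑ a ∈ A, r a * ((T.filter (fun t => s a ≤ t ∧ t < s a + dur a)).card : ℤ) := by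
    calc ∑ a ∈ A.filter (fun a => lo ≤ smin a ∧ smin a < hi),
          rmin a * min (dur a) (max 0 (hi - smax a))
        ≤ ∑ a ∈ A.filter (fun a => lo ≤ smin a ∧ smin a < hi),
          r a * ((T.filter (fun t => s a ≤ t ∧ t < s a + dur a)).card : ℤ) :=
          Finset.sum_le_sum hterm
      _ ≤ ∑ a ∈ A, r a * ((T.filter (fun t => s a ≤ t ∧ t < s a + dur a)).card : ℤ) := by
          refine Finset.sum_le_sum_of_subset_of_nonneg (Finset.filter_subset _ _) ?_
          intro a haA _
          exact mul_nonneg (le_of_lt (lt_of_lt_of_le (hrmin a haA) (hr a haA)))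
            (Int.natCast_nonneg _)
  omega
end

section
/- Soundness of the revised sweep rule for SoftCumulative: if on the rectangle [δ, δ') the profile excluding a has height at least sum_h at every point, and sum_h + min(D(res[a])) > ideal_capa + max_{t ∈ [δ,δ')} max(D(costVar[t])), then in any feasible solution the start of a is not in (δ − dur(a), δ'). -/
/-- Soundness of the revised sweep rule for SoftCumulative: feasibility at time `t`
means the height is at most `ideal_capa + c t` with `c t ≤ cmax t` (where `cmax t`
is the max of `D(costVar t)`). If on `[δ, δ')` the other activities contribute at
least `sum_h`, `sum_h + min(D(res a)) > ideal_capa + max_{t ∈ [δ,δ')} cmax t`, and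
`a` overlaps `[δ, δ')` (i.e. `δ - dur a < s a < δ'`), then the instantiation is
infeasible. -/
theorem soft_sweep_pruning_sound {α : Type*} [DecidableEq α]
    (A : Finset α) (a : α) (ha : a ∈ A)
    (dur : α → ℤ) (hdur : ∀ b ∈ A, 1 ≤ dur b)
    (s r : α → ℤ) (rmin_a : ℤ) (hr : rmin_a ≤ r a)
    (c cmax : ℤ → ℤ) (hc : ∀ t, c t ≤ cmax t)
    (δ δ' sum_h ideal_capa : ℤ) (hδ : δ < δ')
    (hprofile : ∀ t, δ ≤ t → t < δ' →
      sum_h ≤ ∑ b ∈ (A.erase a).filter (fun b => s b ≤ t ∧ t < s b + dur b), r b)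
    (hover : ideal_capa +
        (Finset.Ico δ δ').sup' (Finset.nonempty_Ico.mpr hδ) cmax < sum_h + rmin_a)
    (hstart : δ - dur a < s a ∧ s a < δ') :
    ¬ (∀ t, ∑ b ∈ A.filter (fun b => s b ≤ t ∧ t < s b + dur b), r b
        ≤ ideal_capa + c t) := by
  intro hfeas
  obtain ⟨h1, h2⟩ := hstart
  have hda := hdur a ha
  set t := max δ (s a) with ht
  have hδt : δ ≤ t := le_max_left _ _
  have hst : s a ≤ t := le_max_right _ _
  have htδ' : t < δ' := max_lt hδ h2
  have hta : t < s a + dur a := by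
    rcases max_cases δ (s a) with ⟨h, _⟩ | ⟨h, _⟩ <;> rw [ht, h] <;> omega
  have hsum := hfeas t
  have hprof := hprofile t hδt htδ'
  have hsplit : ∑ b ∈ A.filter (fun b => s b ≤ t ∧ t < s b + dur b), r b
      = r a + ∑ b ∈ (A.erase a).filter (fun b => s b ≤ t ∧ t < s b + dur b), r b := by
    rw [Finset.filter_erase, Finset.add_sum_erase]
    simp [Finset.mem_filter, ha, hst, hta]
  have hmem : t ∈ Finset.Ico δ δ' := Finset.mem_Ico.mpr ⟨hδt, htδ'⟩
  have hle : cmax t ≤ (Finset.Ico δ δ').sup' (Finset.nonempty_Ico.mpr hδ) cmax :=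
    Finset.le_sup' cmax hmem
  have := hc t
  omega
end

section
/- Revised task-interval feasibility for SoftCumulative: if Σ_{a∈S} W(a) > Σ_{t ∈ [lo, hi)} (ideal_capa + max(D(costVar[t]))), then the SoftCumulative constraint has no solution. -/
/-! Every task whose earliest start lies in `[lo, hi)` starts at or after `lo` and runs at least
`min (dur a) (hi - smax a)` time units before `hi`, so it uses at least `W a` units of resource
inside the interval. Summing the per-time capacity bound over `[lo, hi)` and exchanging the order
of summation, the total resource used inside the interval is at least `∑_{a ∈ S} W a` and at most
`∑_t (ideal_capa + cmax t)`. -/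

open Finset

theorem Int.Ico_filter_le_and_lt_add (lo hi s d : ℤ) :
    (Ico lo hi).filter (fun t => s ≤ t ∧ t < s + d) = Ico (max lo s) (min hi (s + d)) := by
  ext t
  simp only [mem_filter, mem_Ico, max_le_iff, lt_min_iff]
  omega

theorem Int.min_le_card_Ico_filter_le_and_lt_add {lo hi s smax d : ℤ} (hlo : lo ≤ s)
    (hs : s ≤ smax) :
    min d (max 0 (hi - smax)) ≤ #((Ico lo hi).filter (fun t => s ≤ t ∧ t < s + d)) := by
  rw [Int.Ico_filter_le_and_lt_add, Int.card_Ico, Int.toNat_eq_max]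
  omega

theorem Int.mul_min_le_sum_Ico_ite {lo hi s smax d rmin r : ℤ} (hrmin : 0 ≤ rmin)
    (hr : rmin ≤ r) (hlo : lo ≤ s) (hs : s ≤ smax) :
    rmin * min d (max 0 (hi - smax)) ≤
      ∑ t ∈ Ico lo hi, if s ≤ t ∧ t < s + d then r else 0 := by
  rw [← sum_filter, sum_const, nsmul_eq_mul]
  have hcard := Int.min_le_card_Ico_filter_le_and_lt_add (d := d) (hi := hi) hlo hs
  have hcard_nonneg : (0 : ℤ) ≤ #((Ico lo hi).filter (fun t => s ≤ t ∧ t < s + d)) :=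
    Nat.cast_nonneg _
  nlinarith [mul_nonneg (sub_nonneg.2 hr) hcard_nonneg, mul_nonneg hrmin (sub_nonneg.2 hcard)]

theorem Finset.sum_sum_filter_comm {ι κ M : Type*} [AddCommMonoid M] (T : Finset ι)
    (A : Finset κ) (p : κ → ι → Prop) [∀ a t, Decidable (p a t)] (f : κ → M) :
    ∑ t ∈ T, ∑ a ∈ A with p a t, f a = ∑ a ∈ A, ∑ t ∈ T, if p a t then f a else 0 := by
  simp_rw [sum_filter]
  exact sum_comm

theorem soft_task_interval_infeasible_general {α : Type*}
    (A : Finset α) (dur smin smax rmin : α → ℤ)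
    (hrmin : ∀ a ∈ A, 0 < rmin a)
    (lo hi ideal_capa : ℤ)
    (c cmax : ℤ → ℤ) (hc : ∀ t, c t ≤ cmax t)
    (s r : α → ℤ)
    (hsmin : ∀ a ∈ A, smin a ≤ s a) (hsmax : ∀ a ∈ A, s a ≤ smax a)
    (hr : ∀ a ∈ A, rmin a ≤ r a)
    (hW : ∑ t ∈ Finset.Ico lo hi, (ideal_capa + cmax t) <
      ∑ a ∈ A.filter (fun a => lo ≤ smin a ∧ smin a < hi),
        rmin a * min (dur a) (max 0 (hi - smax a))) :
    ¬ (∀ t, ∑ a ∈ A.filter (fun a => s a ≤ t ∧ t < s a + dur a), r a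
        ≤ ideal_capa + c t) := by
  intro hload
  have henergy : ∑ a ∈ A.filter (fun a => lo ≤ smin a ∧ smin a < hi),
        rmin a * min (dur a) (max 0 (hi - smax a)) ≤
      ∑ t ∈ Ico lo hi, ∑ a ∈ A.filter (fun a => s a ≤ t ∧ t < s a + dur a), r a := by
    rw [sum_sum_filter_comm]
    refine (sum_le_sum fun a ha => ?_).trans
      (sum_le_sum_of_subset_of_nonneg (filter_subset _ A) fun a ha _ => ?_)
    · obtain ⟨haA, hlo, -⟩ := mem_filter.1 ha
      exact Int.mul_min_le_sum_Ico_ite (hrmin a haA).le (hr a haA) (hlo.trans (hsmin a haA))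
        (hsmax a haA)
    · exact sum_nonneg fun t _ => by split_ifs <;> linarith [hrmin a ha, hr a ha]
  have hcapacity : ∑ t ∈ Ico lo hi, ∑ a ∈ A.filter (fun a => s a ≤ t ∧ t < s a + dur a), r a ≤
      ∑ t ∈ Ico lo hi, (ideal_capa + cmax t) :=
    sum_le_sum fun t _ => (hload t).trans (by linarith [hc t])
  exact (henergy.trans hcapacity).not_gt hW

/-- Revised task-interval feasibility for SoftCumulative: if
`∑_{a ∈ S} W a > ∑_{t ∈ [lo,hi)} (ideal_capa + cmax t)` then no instantiation
satisfying the per-time-point bound `h_t ≤ ideal_capa + c t` (with `c t ≤ cmax t`)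
exists. -/
theorem soft_task_interval_infeasible {α : Type*} [DecidableEq α]
    (A : Finset α) (dur smin smax rmin : α → ℤ)
    (hdur : ∀ a ∈ A, 1 ≤ dur a) (hrmin : ∀ a ∈ A, 0 < rmin a)
    (lo hi ideal_capa : ℤ) (hlohi : lo < hi)
    (c cmax : ℤ → ℤ) (hc : ∀ t, c t ≤ cmax t)
    (s r : α → ℤ)
    (hsmin : ∀ a ∈ A, smin a ≤ s a) (hsmax : ∀ a ∈ A, s a ≤ smax a)
    (hr : ∀ a ∈ A, rmin a ≤ r a)
    (hW : ∑ t ∈ Finset.Ico lo hi, (ideal_capa + cmax t) <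
      ∑ a ∈ A.filter (fun a => lo ≤ smin a ∧ smin a < hi),
        rmin a * min (dur a) (max 0 (hi - smax a))) :
    ¬ (∀ t, ∑ a ∈ A.filter (fun a => s a ≤ t ∧ t < s a + dur a), r a
        ≤ ideal_capa + c t) :=
  soft_task_interval_infeasible_general A dur smin smax rmin hrmin lo hi ideal_capa c cmax hc s r
    hsmin hsmax hr hW
end

section
/- LB2 is a valid lower bound: cost ≥ LB1 + max over task intervals I of (Σ_{a∈S_I} W_I(a) − FreeArea_I − lb1_I), where FreeArea_I = |I|·ideal_capa and lb1_I = Σ_{t∈I} min(D(costVar[t])). -/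
/-- LB2 is a valid lower bound: in a solution of SoftCumulativeSum with
`costVar t = max 0 (h t - ideal_capa)`, `cvmin t ≤ costVar t`, and
`cost = ∑_{t<m} costVar t`, for any task interval `I = [lo, hi) ⊆ [0, m)` whose
energy lower bound `W` satisfies `W ≤ ∑_{t∈I} h t`, we have
`cost ≥ LB1 + (W - |I|·ideal_capa - ∑_{t∈I} cvmin t)`. -/
theorem LB2_valid (m lo hi : ℕ) (hlo : lo ≤ hi) (hhi : hi ≤ m)
    (ideal_capa : ℤ) (hic : 0 ≤ ideal_capa)
    (h costVar cvmin : ℕ → ℤ)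
    (hdef : ∀ t < m, costVar t = max 0 (h t - ideal_capa))
    (hmin : ∀ t < m, cvmin t ≤ costVar t)
    (cost : ℤ) (hcost : cost = ∑ t ∈ Finset.range m, costVar t)
    (W : ℤ) (hW : W ≤ ∑ t ∈ Finset.Ico lo hi, h t) :
    (∑ t ∈ Finset.range m, cvmin t) +
      (W - ((hi : ℤ) - (lo : ℤ)) * ideal_capa - ∑ t ∈ Finset.Ico lo hi, cvmin t)
      ≤ cost := by
  have hsub : Finset.Ico lo hi ⊆ Finset.range m := by
    intro t ht
    simp only [Finset.mem_Ico] at ht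
    exact Finset.mem_range.mpr (lt_of_lt_of_le ht.2 hhi)
  have hsplit1 : ∑ t ∈ Finset.range m, costVar t
      = ∑ t ∈ Finset.range m \ Finset.Ico lo hi, costVar t
        + ∑ t ∈ Finset.Ico lo hi, costVar t :=
    (Finset.sum_sdiff hsub).symm
  have hsplit2 : ∑ t ∈ Finset.range m, cvmin t
      = ∑ t ∈ Finset.range m \ Finset.Ico lo hi, cvmin t
        + ∑ t ∈ Finset.Ico lo hi, cvmin t :=
    (Finset.sum_sdiff hsub).symm
  have key1 : ∑ t ∈ Finset.range m \ Finset.Ico lo hi, cvmin t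
      ≤ ∑ t ∈ Finset.range m \ Finset.Ico lo hi, costVar t := by
    apply Finset.sum_le_sum
    intro t ht
    exact hmin t (Finset.mem_range.mp (Finset.mem_sdiff.mp ht).1)
  have key2 : W - ((hi : ℤ) - (lo : ℤ)) * ideal_capa
      ≤ ∑ t ∈ Finset.Ico lo hi, costVar t := by
    have h1 : ∑ t ∈ Finset.Ico lo hi, (h t - ideal_capa)
        ≤ ∑ t ∈ Finset.Ico lo hi, costVar t := by
      apply Finset.sum_le_sum
      intro t ht
      rw [hdef t (Finset.mem_range.mp (hsub ht))]
      exact le_max_right _ _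
    have h2 : ∑ t ∈ Finset.Ico lo hi, (h t - ideal_capa)
        = (∑ t ∈ Finset.Ico lo hi, h t) - ((hi : ℤ) - (lo : ℤ)) * ideal_capa := by
      rw [Finset.sum_sub_distrib, Finset.sum_const, Nat.card_Ico, nsmul_eq_mul]
      push_cast [Nat.cast_sub hlo]
      ring
    have := h2 ▸ h1
    linarith
  rw [hcost, hsplit1, hsplit2]
  linarith
end

section
/- Partition bound dominates LB2: if P is a set of pairwise-disjoint task intervals partitioning part of [0, m), then LB2 = LB1 + max_{I∈P} Inc_I ≤ LB1 + Σ_{I∈P} Inc_I = LB_P, provided each Inc_I ≥ 0; moreover LB_P is itself a valid lower bound on cost. -/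
/-! Each interval `I ∈ P` contributes at most `∑_{t∈I} (costVar t - cvmin t)`: the energy bound
gives `W I - |I|·ideal_capa ≤ ∑_{t∈I} (h t - ideal_capa) ≤ ∑_{t∈I} costVar t`. These slack terms are
nonnegative, so by disjointness their sum over the whole family is at most their sum over
`[0, m)`, which is `cost - LB1`. The second claim only says that a maximum of nonnegative numbers
is at most their sum. -/

open Finset

namespace Finset

theorem sup'_le_sum_of_nonneg {ι M : Type*} [AddCommMonoid M] [LinearOrder M]
    [IsOrderedAddMonoid M] {s : Finset ι} (hs : s.Nonempty) {f : ι → M}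
    (hf : ∀ i ∈ s, 0 ≤ f i) : s.sup' hs f ≤ ∑ i ∈ s, f i :=
  sup'_le hs f fun _ hi => single_le_sum hf hi

theorem sum_sum_le_sum_of_pairwiseDisjoint {ι α M : Type*} [AddCommMonoid M] [PartialOrder M]
    [IsOrderedAddMonoid M] [DecidableEq α] {P : Finset ι} {g : ι → Finset α} {s : Finset α}
    {f : α → M} (hdisj : (P : Set ι).PairwiseDisjoint g) (hsub : ∀ i ∈ P, g i ⊆ s)
    (hf : ∀ a ∈ s, 0 ≤ f a) : ∑ i ∈ P, ∑ a ∈ g i, f a ≤ ∑ a ∈ s, f a := by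
  rw [← sum_biUnion hdisj]
  exact sum_le_sum_of_subset_of_nonneg (biUnion_subset.2 hsub) fun a ha _ => hf a ha

theorem sum_sub_card_nsmul_le_sum {ι G : Type*} [AddCommGroup G] [PartialOrder G]
    [IsOrderedAddMonoid G] {s : Finset ι} {f g : ι → G} (c : G) (h : ∀ i ∈ s, f i - c ≤ g i) :
    ∑ i ∈ s, f i - #s • c ≤ ∑ i ∈ s, g i := by
  rw [← sum_const, ← sum_sub_distrib]
  exact sum_le_sum h

end Finset

theorem sum_Ico_sub_mul_le_sum {R : Type*} [Ring R] [PartialOrder R] [IsOrderedAddMonoid R]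
    {f g : ℕ → R} {a b : ℕ} (hab : a ≤ b) (c : R) (h : ∀ t ∈ Ico a b, f t - c ≤ g t) :
    ∑ t ∈ Ico a b, f t - ((b : R) - (a : R)) * c ≤ ∑ t ∈ Ico a b, g t := by
  have := sum_sub_card_nsmul_le_sum c h
  rwa [Nat.card_Ico, nsmul_eq_mul, Nat.cast_sub hab] at this

theorem partition_bound_dominates_general (m : ℕ) (ideal_capa : ℤ)
    (h costVar cvmin : ℕ → ℤ)
    (hdef : ∀ t < m, costVar t = max 0 (h t - ideal_capa))
    (hmin : ∀ t < m, cvmin t ≤ costVar t)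
    (cost : ℤ) (hcost : cost = ∑ t ∈ Finset.range m, costVar t)
    (P : Finset (ℕ × ℕ)) (hP : P.Nonempty)
    (hsub : ∀ p ∈ P, p.1 ≤ p.2 ∧ p.2 ≤ m)
    (hdisj : ∀ p ∈ P, ∀ q ∈ P, p ≠ q → Disjoint (Finset.Ico p.1 p.2) (Finset.Ico q.1 q.2))
    (W : ℕ × ℕ → ℤ) (hW : ∀ p ∈ P, W p ≤ ∑ t ∈ Finset.Ico p.1 p.2, h t)
    (Inc : ℕ × ℕ → ℤ)
    (hInc : ∀ p ∈ P, Inc p =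
      W p - ((p.2 : ℤ) - (p.1 : ℤ)) * ideal_capa - ∑ t ∈ Finset.Ico p.1 p.2, cvmin t) :
    ((∑ t ∈ Finset.range m, cvmin t) + ∑ p ∈ P, Inc p ≤ cost) ∧
      ((∀ p ∈ P, 0 ≤ Inc p) → P.sup' hP Inc ≤ ∑ p ∈ P, Inc p) := by
  have hIco_sub : ∀ p ∈ P, Ico p.1 p.2 ⊆ range m := fun p hp t ht =>
    mem_range.2 <| (mem_Ico.1 ht).2.trans_le (hsub p hp).2
  have hInc_le : ∀ p ∈ P, Inc p ≤ ∑ t ∈ Ico p.1 p.2, (costVar t - cvmin t) := by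
    intro p hp
    have hexcess := sum_Ico_sub_mul_le_sum (g := costVar) (hsub p hp).1 ideal_capa
      fun t ht => (hdef t (mem_range.1 (hIco_sub p hp ht))).symm ▸ le_max_right _ _
    rw [hInc p hp, sum_sub_distrib]
    linarith [hW p hp]
  refine ⟨?_, sup'_le_sum_of_nonneg hP⟩
  have hslack : ∑ p ∈ P, ∑ t ∈ Ico p.1 p.2, (costVar t - cvmin t)
      ≤ ∑ t ∈ range m, (costVar t - cvmin t) :=
    sum_sum_le_sum_of_pairwiseDisjoint hdisj hIco_sub
      fun t ht => sub_nonneg.2 (hmin t (mem_range.1 ht))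
  rw [sum_sub_distrib] at hslack
  linarith [sum_le_sum hInc_le]

/-- Partition bound dominates LB2. For a finite family `P` of pairwise-disjoint
subintervals `[p.1, p.2) ⊆ [0, m)` with energy bounds `W p ≤ ∑_{t ∈ [p.1,p.2)} h t`,
define `Inc p = W p - |p|·ideal_capa - ∑_{t∈[p.1,p.2)} cvmin t`. Then
(1) `cost ≥ LB1 + ∑_{p∈P} Inc p` (so `LB_P` is a valid lower bound), and
(2) if all `Inc p ≥ 0` then `max_{p∈P} Inc p ≤ ∑_{p∈P} Inc p` (so `LB2 ≤ LB_P`). -/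
theorem partition_bound_dominates (m : ℕ) (ideal_capa : ℤ) (hic : 0 ≤ ideal_capa)
    (h costVar cvmin : ℕ → ℤ)
    (hdef : ∀ t < m, costVar t = max 0 (h t - ideal_capa))
    (hmin : ∀ t < m, cvmin t ≤ costVar t)
    (cost : ℤ) (hcost : cost = ∑ t ∈ Finset.range m, costVar t)
    (P : Finset (ℕ × ℕ)) (hP : P.Nonempty)
    (hsub : ∀ p ∈ P, p.1 ≤ p.2 ∧ p.2 ≤ m)
    (hdisj : ∀ p ∈ P, ∀ q ∈ P, p ≠ q → Disjoint (Finset.Ico p.1 p.2) (Finset.Ico q.1 q.2))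
    (W : ℕ × ℕ → ℤ) (hW : ∀ p ∈ P, W p ≤ ∑ t ∈ Finset.Ico p.1 p.2, h t)
    (Inc : ℕ × ℕ → ℤ)
    (hInc : ∀ p ∈ P, Inc p =
      W p - ((p.2 : ℤ) - (p.1 : ℤ)) * ideal_capa - ∑ t ∈ Finset.Ico p.1 p.2, cvmin t) :
    ((∑ t ∈ Finset.range m, cvmin t) + ∑ p ∈ P, Inc p ≤ cost) ∧
      ((∀ p ∈ P, 0 ≤ Inc p) → P.sup' hP Inc ≤ ∑ p ∈ P, Inc p) :=
  partition_bound_dominates_general m ideal_capa h costVar cvmin hdef hmin cost hcost P hP hsub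
    hdisj W hW Inc hInc
end
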